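/- arXiv:2603.28479 — 2 statements merged into one kernel-verified Lean document; each statement's English description precedes it below -/
import Mathlib

section
/- Let n ≥ 2 and M ∈ (0, 1/n), and let V(s) = 1 - (e^{-ns} + n e^{s})/((n+1)(M+1)). Then V has exactly two zeros s_- < 0 < s_+, V > 0 on (s_-, s_+), and |V'(s_+)| < V'(s_-), i.e. (e^{s_+} - e^{-n s_+}) < (e^{-n s_-} - e^{s_-}). -/
/-!
Substituting `u = exp s` and `m = M + 1`, the zeros of `V` correspond to the positive roots of
`P u = n u^(n+1) - (n+1) m u^n + 1` (`profilePoly n m`), since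
`exp (-n s) * P (exp s) = -(n+1) m V s`.
As `P' u = n (n+1) u^(n-1) (u - m)`, `P` decreases on `[0, m]` and increases on `[m, ∞)`, and
`P 0 = 1 > 0 > P 1`, so `P` has exactly two positive roots `a < 1 < m < b` and is negative between
them. Using `P a = P b = 0` to eliminate `a^(-n)` and `b^(-n)`, the derivative inequality becomes
`a + b < 2 m`. This follows from `P (m - t) < P (m + t)` for `0 < t ≤ m`: the difference vanishes
at `t = 0` and has derivative `n (n+1) t ((m+t)^(n-1) - (m-t)^(n-1)) > 0` when `n ≥ 2`.
-/

open Real Set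

noncomputable def profilePoly (n : ℕ) (m u : ℝ) : ℝ :=
  n * u ^ (n + 1) - (n + 1) * m * u ^ n + 1

theorem hasDerivAt_profilePoly (n : ℕ) (m u : ℝ) :
    HasDerivAt (profilePoly n m) (n * (n + 1) * u ^ (n - 1) * (u - m)) u := by
  have h := (((hasDerivAt_pow (n + 1) u).const_mul (n : ℝ)).sub
    ((hasDerivAt_pow n u).const_mul ((n + 1) * m))).add_const 1
  refine h.congr_deriv ?_
  rcases n with _ | k
  · simp
  · simp only [Nat.cast_add, Nat.cast_one, Nat.add_sub_cancel, pow_succ]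
    ring

theorem continuous_profilePoly (n : ℕ) (m : ℝ) : Continuous (profilePoly n m) :=
  continuous_iff_continuousAt.2 fun u => (hasDerivAt_profilePoly n m u).continuousAt

section profilePoly

variable {n : ℕ} {m a b : ℝ}

theorem profilePoly_strictAntiOn (hn : 1 ≤ n) : StrictAntiOn (profilePoly n m) (Icc 0 m) := by
  refine strictAntiOn_of_deriv_neg (convex_Icc 0 m) (continuous_profilePoly n m).continuousOn
    fun u hu => ?_
  rw [interior_Icc] at hu
  rw [(hasDerivAt_profilePoly n m u).deriv]
  have hn' : (1 : ℝ) ≤ n := by exact_mod_cast hn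
  have hpow : 0 < u ^ (n - 1) := pow_pos hu.1 _
  exact mul_neg_of_pos_of_neg (by positivity) (by linarith [hu.2])

theorem profilePoly_strictMonoOn (hn : 1 ≤ n) (hm : 0 ≤ m) :
    StrictMonoOn (profilePoly n m) (Ici m) := by
  refine strictMonoOn_of_deriv_pos (convex_Ici m) (continuous_profilePoly n m).continuousOn
    fun u hu => ?_
  rw [interior_Ici] at hu
  rw [(hasDerivAt_profilePoly n m u).deriv]
  have hn' : (1 : ℝ) ≤ n := by exact_mod_cast hn
  have hpow : 0 < u ^ (n - 1) := pow_pos (hm.trans_lt hu) _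
  exact mul_pos (by positivity) (sub_pos.2 hu)

theorem profilePoly_sub_lt_add (hn : 2 ≤ n) {t : ℝ} (ht : 0 < t) (htm : t ≤ m) :
    profilePoly n m (m - t) < profilePoly n m (m + t) := by
  set q : ℝ → ℝ := fun τ => profilePoly n m (m + τ) - profilePoly n m (m - τ)
  have hq : ∀ τ,
      HasDerivAt q (n * (n + 1) * τ * ((m + τ) ^ (n - 1) - (m - τ) ^ (n - 1))) τ := by
    intro τ
    have h := ((hasDerivAt_profilePoly n m (m + τ)).comp τ ((hasDerivAt_id τ).const_add m)).sub
      ((hasDerivAt_profilePoly n m (m - τ)).comp τ ((hasDerivAt_id τ).const_sub m))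
    exact h.congr_deriv (by ring)
  have hmono : StrictMonoOn q (Icc 0 m) := by
    refine strictMonoOn_of_deriv_pos (convex_Icc 0 m)
      (continuous_iff_continuousAt.2 fun τ => (hq τ).continuousAt).continuousOn fun s hs => ?_
    rw [interior_Icc] at hs
    rw [(hq s).deriv]
    have hn' : (2 : ℝ) ≤ n := by exact_mod_cast hn
    have hgap : (m - s) ^ (n - 1) < (m + s) ^ (n - 1) :=
      pow_lt_pow_left₀ (by linarith [hs.1]) (by linarith [hs.2]) (by omega)
    exact mul_pos (mul_pos (by positivity) hs.1) (sub_pos.2 hgap)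
  have h := hmono (left_mem_Icc.2 (ht.le.trans htm)) ⟨ht.le, htm⟩ ht
  simp only [q, add_zero, sub_zero, sub_self] at h
  linarith

theorem add_lt_two_mul_of_profilePoly_eq (hn : 2 ≤ n) (ha : 0 ≤ a) (ham : a < m)
    (hmb : m ≤ b) (hab : profilePoly n m a = profilePoly n m b) : a + b < 2 * m := by
  have h := profilePoly_sub_lt_add hn (m := m) (t := m - a) (by linarith) (by linarith)
  rw [sub_sub_cancel, hab] at h
  have := ((profilePoly_strictMonoOn (by omega) (by linarith)).lt_iff_lt hmb
    (show m ≤ m + (m - a) by linarith)).1 h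
  linarith

theorem exists_profilePoly_roots (hn : 1 ≤ n) (hm : 1 < m) :
    ∃ a b, 0 < a ∧ a < 1 ∧ m < b ∧ profilePoly n m a = 0 ∧ profilePoly n m b = 0 := by
  have hn' : (1 : ℝ) ≤ n := by exact_mod_cast hn
  have hp0 : profilePoly n m 0 = 1 := by simp [profilePoly, zero_pow (by omega : n ≠ 0)]
  have hp1 : profilePoly n m 1 < 0 := by simp only [profilePoly, one_pow]; nlinarith
  have hpm : profilePoly n m m < 0 := by
    have : 1 < m ^ (n + 1) := one_lt_pow₀ hm (by omega)
    simp only [profilePoly, pow_succ] at this ⊢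
    linarith
  set u₀ := (n + 1) * m / n
  have hmu₀ : m < u₀ := by rw [lt_div_iff₀ (by positivity)]; linarith
  have hpu₀ : profilePoly n m u₀ = 1 := by
    have hn0 : (n : ℝ) ≠ 0 := by positivity
    simp only [profilePoly, u₀, pow_succ]
    field_simp
    ring
  have hcont : ∀ s, ContinuousOn (profilePoly n m) s :=
    fun _ => (continuous_profilePoly n m).continuousOn
  obtain ⟨a, ha, hpa⟩ := intermediate_value_Ioo' zero_le_one (hcont _)
    (show (0 : ℝ) ∈ _ by rw [hp0]; exact ⟨hp1, one_pos⟩)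
  obtain ⟨b, hb, hpb⟩ := intermediate_value_Ioo hmu₀.le (hcont _)
    (show (0 : ℝ) ∈ _ by rw [hpu₀]; exact ⟨hpm, one_pos⟩)
  exact ⟨a, b, ha.1, ha.2, hb.1, hpa, hpb⟩

theorem eq_or_eq_of_profilePoly_eq_zero (hn : 1 ≤ n) (ha : 0 ≤ a) (ham : a ≤ m)
    (hmb : m ≤ b) (hpa : profilePoly n m a = 0) (hpb : profilePoly n m b = 0) {u : ℝ}
    (hu : 0 ≤ u) (hpu : profilePoly n m u = 0) : u = a ∨ u = b := by
  rcases le_total u m with hum | hmu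
  · exact Or.inl ((profilePoly_strictAntiOn hn).injOn ⟨hu, hum⟩ ⟨ha, ham⟩
      (hpu.trans hpa.symm))
  · exact Or.inr ((profilePoly_strictMonoOn hn (ha.trans ham)).injOn hmu hmb
      (hpu.trans hpb.symm))

theorem profilePoly_neg_of_mem_Ioo (hn : 1 ≤ n) (ha : 0 ≤ a) (ham : a ≤ m) (hmb : m ≤ b)
    (hpa : profilePoly n m a = 0) (hpb : profilePoly n m b = 0) {u : ℝ} (hu : u ∈ Ioo a b) :
    profilePoly n m u < 0 := by
  rcases le_total u m with hum | hmu
  · rw [← hpa]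
    exact profilePoly_strictAntiOn hn ⟨ha, ham⟩ ⟨ha.trans hu.1.le, hum⟩ hu.1
  · rw [← hpb]
    exact profilePoly_strictMonoOn hn (ha.trans ham) hmu hmb hu.2

end profilePoly

noncomputable def limitProfile (n : ℕ) (m s : ℝ) : ℝ :=
  1 - (exp (-n * s) + n * exp s) / ((n + 1) * m)

theorem exp_neg_mul_mul_profilePoly_exp (n : ℕ) (m s : ℝ) :
    exp (-n * s) * profilePoly n m (exp s) = exp (-n * s) + n * exp s - (n + 1) * m := by
  have h : exp (-n * s) * exp s ^ n = 1 := by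
    rw [← exp_nat_mul, ← exp_add]; simp
  simp only [profilePoly, pow_succ]
  linear_combination (n * exp s - (n + 1) * m) * h

section limitProfile

variable {n : ℕ} {m : ℝ}

theorem exp_neg_mul_eq_of_profilePoly_exp_eq_zero {s : ℝ} (hs : profilePoly n m (exp s) = 0) :
    exp (-n * s) = (n + 1) * m - n * exp s := by
  linarith [exp_neg_mul_mul_profilePoly_exp n m s, hs ▸ mul_zero (exp (-n * s))]

theorem limitProfile_eq_mul_profilePoly (hm : 0 < m) (s : ℝ) :
    limitProfile n m s = exp (-n * s) / ((n + 1) * m) * -profilePoly n m (exp s) := by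
  rw [limitProfile, mul_neg, ← mul_div_right_comm, exp_neg_mul_mul_profilePoly_exp]
  field_simp
  ring

theorem limitProfile_eq_zero_iff (hm : 0 < m) (s : ℝ) :
    limitProfile n m s = 0 ↔ profilePoly n m (exp s) = 0 := by
  rw [limitProfile_eq_mul_profilePoly hm, mul_eq_zero, neg_eq_zero,
    or_iff_right (by positivity)]

theorem limitProfile_pos_iff (hm : 0 < m) (s : ℝ) :
    0 < limitProfile n m s ↔ profilePoly n m (exp s) < 0 := by
  rw [limitProfile_eq_mul_profilePoly hm, mul_pos_iff_of_pos_left (by positivity), neg_pos]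

theorem exp_sub_exp_neg_mul_lt (hn : 2 ≤ n) {sm sp : ℝ} (hsm : exp sm < m) (hsp : m ≤ exp sp)
    (hpm : profilePoly n m (exp sm) = 0) (hpp : profilePoly n m (exp sp) = 0) :
    exp sp - exp (-n * sp) < exp (-n * sm) - exp sm := by
  have hsum := add_lt_two_mul_of_profilePoly_eq hn (exp_pos sm).le hsm hsp (hpm.trans hpp.symm)
  rw [exp_neg_mul_eq_of_profilePoly_exp_eq_zero hpm, exp_neg_mul_eq_of_profilePoly_exp_eq_zero hpp]
  linarith [mul_lt_mul_of_pos_left hsum (by positivity : (0 : ℝ) < n + 1)]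

end limitProfile

/-- The limit profile V has exactly two zeros s₋ < 0 < s₊, is positive between them,
and the boundary derivatives satisfy e^{s₊} - e^{-n s₊} < e^{-n s₋} - e^{s₋}. -/
theorem stmt8 (n : ℕ) (hn : 2 ≤ n) (M : ℝ) (hM : M ∈ Set.Ioo 0 (1 / (n : ℝ)))
    (V : ℝ → ℝ)
    (hV : V = fun s => 1 - (Real.exp (-(n : ℝ) * s) + (n : ℝ) * Real.exp s)
      / (((n : ℝ) + 1) * (M + 1))) :
    ∃ sm sp : ℝ, sm < 0 ∧ 0 < sp ∧ V sm = 0 ∧ V sp = 0 ∧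
      (∀ s : ℝ, V s = 0 → s = sm ∨ s = sp) ∧
      (∀ s ∈ Set.Ioo sm sp, 0 < V s) ∧
      Real.exp sp - Real.exp (-(n : ℝ) * sp)
        < Real.exp (-(n : ℝ) * sm) - Real.exp sm := by
  set m := M + 1
  have hm : 1 < m := by linarith [hM.1]
  have hV : V = limitProfile n m := hV
  subst hV
  have hn1 : 1 ≤ n := by omega
  obtain ⟨a, b, ha0, ha1, hmb, hpa, hpb⟩ := exists_profilePoly_roots hn1 hm
  obtain ⟨sm, rfl⟩ : ∃ sm, exp sm = a := ⟨log a, exp_log ha0⟩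
  obtain ⟨sp, rfl⟩ : ∃ sp, exp sp = b := ⟨log b, exp_log (by linarith)⟩
  have hm0 : 0 < m := by linarith
  refine ⟨sm, sp, exp_lt_one_iff.1 ha1, one_lt_exp_iff.1 (by linarith),
    (limitProfile_eq_zero_iff hm0 _).2 hpa, (limitProfile_eq_zero_iff hm0 _).2 hpb,
    fun s hs => ?_, fun s hs => ?_, exp_sub_exp_neg_mul_lt hn (by linarith) hmb.le hpa hpb⟩
  · rcases eq_or_eq_of_profilePoly_eq_zero hn1 ha0.le (by linarith) hmb.le hpa hpb
      (exp_pos s).le ((limitProfile_eq_zero_iff hm0 s).1 hs) with h | h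
    · exact Or.inl (exp_injective h)
    · exact Or.inr (exp_injective h)
  · exact (limitProfile_pos_iff hm0 s).2 (profilePoly_neg_of_mem_Ioo hn1 ha0.le (by linarith)
      hmb.le hpa hpb ⟨exp_lt_exp.2 hs.1, exp_lt_exp.2 hs.2⟩)
end

section
/- Let n ≥ 2, ℓ ∈ {1,2,3,4,6}, c ∈ ℝ, M > 0, and f locally Lipschitz with f > 0 on an open interval 𝓘_f ⊂ ℝ₊ containing M, with 0 ∈ ∂𝓘_f. For S ∈ (0, π/ℓ), let Z be the maximal solution of Z'' + ((n-1)cot(ℓs) - c/(ℓ sin(ℓs)))·Z' + f(Z) = 0 with Z(S) = M, Z'(S) = 0, defined on (e₁, e₂) ⊆ (0, π/ℓ). Then as long as Z remains positive, Z is strictly increasing on the left of S and strictly decreasing on the right of S. -/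
/-- Monotonicity of the isoparametric radial profile: as long as Z stays in the
admissible interval, Z is increasing left of S and decreasing right of S. -/
theorem stmt15 (n ℓ : ℕ) (hn : 2 ≤ n)
    (hℓ : ℓ = 1 ∨ ℓ = 2 ∨ ℓ = 3 ∨ ℓ = 4 ∨ ℓ = 6)
    (c M b : ℝ) (hb : 0 < b) (hM : M ∈ Set.Ioo 0 b)
    (f : ℝ → ℝ) (hf : LocallyLipschitz f)
    (hfpos : ∀ x ∈ Set.Ioo (0 : ℝ) b, 0 < f x)
    (S e₁ e₂ : ℝ) (hS : S ∈ Set.Ioo e₁ e₂)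
    (hsub : Set.Ioo e₁ e₂ ⊆ Set.Ioo 0 (Real.pi / (ℓ : ℝ)))
    (Z Z' Z'' : ℝ → ℝ)
    (hZ : ∀ s ∈ Set.Ioo e₁ e₂, HasDerivAt Z (Z' s) s)
    (hZ' : ∀ s ∈ Set.Ioo e₁ e₂, HasDerivAt Z' (Z'' s) s)
    (hode : ∀ s ∈ Set.Ioo e₁ e₂,
      Z'' s + (((n : ℝ) - 1) * Real.cot ((ℓ : ℝ) * s)
        - c / ((ℓ : ℝ) * Real.sin ((ℓ : ℝ) * s))) * Z' s + f (Z s) = 0)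
    (hZS : Z S = M) (hZ'S : Z' S = 0) :
    ∀ s ∈ Set.Ioo e₁ e₂, (∀ x ∈ Set.uIcc S s, Z x ∈ Set.Ioo 0 b) →
      (s < S → 0 < Z' s) ∧ (S < s → Z' s < 0) := by
  have hℓpos : (0:ℝ) < (ℓ:ℝ) := by
    rcases hℓ with h|h|h|h|h <;> rw [h] <;> norm_num
  set I := Set.Ioo e₁ e₂ with hIdef
  have hsinpos : ∀ s ∈ I, 0 < Real.sin ((ℓ:ℝ) * s) := by
    intro s hs
    obtain ⟨h0, hπ⟩ := hsub hs
    refine Real.sin_pos_of_pos_of_lt_pi (by positivity) ?_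
    calc (ℓ:ℝ) * s < (ℓ:ℝ) * (Real.pi / ℓ) := by
          exact mul_lt_mul_of_pos_left hπ hℓpos
      _ = Real.pi := by field_simp
  set g : ℝ → ℝ := fun s => ((n:ℝ)-1) * Real.cot ((ℓ:ℝ)*s) - c / ((ℓ:ℝ) * Real.sin ((ℓ:ℝ)*s))
    with hgdef
  have hsincont : ∀ s : ℝ, ContinuousAt (fun s : ℝ => Real.sin ((ℓ:ℝ)*s)) s :=
    fun s => (Real.continuous_sin.comp (continuous_const.mul continuous_id)).continuousAt
  have hgcont : ∀ s ∈ I, ContinuousAt g s := by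
    intro s hs
    have hsin := (hsinpos s hs).ne'
    have h1 : ContinuousAt (fun s : ℝ =>
        ((n:ℝ)-1) * (Real.cos ((ℓ:ℝ)*s) / Real.sin ((ℓ:ℝ)*s))
          - c / ((ℓ:ℝ) * Real.sin ((ℓ:ℝ)*s))) s := by
      refine ContinuousAt.sub (ContinuousAt.mul continuousAt_const
        (ContinuousAt.div ((Real.continuous_cos.comp
          (continuous_const.mul continuous_id)).continuousAt) (hsincont s) hsin))
        (ContinuousAt.div continuousAt_const
          (ContinuousAt.mul continuousAt_const (hsincont s)) ?_)
      positivity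
    refine h1.congr ?_
    have : ∀ x ∈ I, g x = ((n:ℝ)-1) * (Real.cos ((ℓ:ℝ)*x) / Real.sin ((ℓ:ℝ)*x))
        - c / ((ℓ:ℝ) * Real.sin ((ℓ:ℝ)*x)) := by
      intro x hx
      rw [hgdef]; simp [Real.cot_eq_cos_div_sin]
    exact Filter.eventuallyEq_of_mem (isOpen_Ioo.mem_nhds hs) (fun x hx => (this x hx).symm)
  have hgcontOn : ContinuousOn g I := fun s hs => (hgcont s hs).continuousWithinAt
  have hIconn : Set.OrdConnected I := Set.ordConnected_Ioo
  -- integrating factor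
  set G : ℝ → ℝ := fun s => ∫ x in S..s, g x with hGdef
  set μ : ℝ → ℝ := fun s => Real.exp (G s) with hμdef
  have hμpos : ∀ s, 0 < μ s := fun s => Real.exp_pos _
  have hμderiv : ∀ s ∈ I, HasDerivAt μ (g s * μ s) s := by
    intro s hs
    have hint : IntervalIntegrable g MeasureTheory.volume S s :=
      (hgcontOn.mono (hIconn.uIcc_subset hS hs)).intervalIntegrable
    have hG : HasDerivAt G (g s) s :=
      intervalIntegral.integral_hasDerivAt_right hint
        (hgcontOn.stronglyMeasurableAtFilter isOpen_Ioo s hs) (hgcont s hs)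
    have := hG.exp
    simpa [hμdef, mul_comm] using this
  have hW : ∀ s ∈ I, HasDerivAt (fun s => μ s * Z' s) (-(μ s * f (Z s))) s := by
    intro s hs
    have h := (hμderiv s hs).mul (hZ' s hs)
    have hod := hode s hs
    have : g s * μ s * Z' s + μ s * Z'' s = -(μ s * f (Z s)) := by
      have hz : Z'' s = -(g s * Z' s) - f (Z s) := by rw [hgdef]; linarith [hod]
      rw [hz]; ring
    rwa [this] at h
  have hZcont : ContinuousOn Z I := fun s hs => (hZ s hs).continuousAt.continuousWithinAt
  have hμcont : ContinuousOn μ I := fun s hs => (hμderiv s hs).continuousAt.continuousWithinAt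
  intro s hs hZin
  have huIcc : Set.uIcc S s ⊆ I := hIconn.uIcc_subset hS hs
  have hintcont : ContinuousOn (fun x => μ x * f (Z x)) (Set.uIcc S s) :=
    (hμcont.mono huIcc).mul (hf.continuous.comp_continuousOn (hZcont.mono huIcc))
  have hftc : μ s * Z' s - μ S * Z' S = ∫ x in S..s, -(μ x * f (Z x)) := by
    rw [intervalIntegral.integral_eq_sub_of_hasDerivAt
      (fun x hx => hW x (huIcc hx)) (hintcont.neg.intervalIntegrable)]
  rw [hZ'S, mul_zero, sub_zero] at hftc
  have hkey : μ s * Z' s = -∫ x in S..s, μ x * f (Z x) := by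
    rw [hftc, intervalIntegral.integral_neg]
  constructor
  · intro hlt
    have hpos : 0 < ∫ x in s..S, μ x * f (Z x) := by
      refine intervalIntegral.intervalIntegral_pos_of_pos_on
        ((hintcont.mono (by rw [Set.uIcc_comm])).intervalIntegrable) ?_ hlt
      intro x hx
      have hx' : x ∈ Set.uIcc S s := by
        rw [Set.uIcc_comm]; exact Set.Icc_subset_uIcc (Set.Ioo_subset_Icc_self hx)
      exact mul_pos (hμpos x) (hfpos _ (hZin x hx'))
    have : 0 < μ s * Z' s := by
      rw [hkey, intervalIntegral.integral_symm, neg_neg]; exact hpos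
    nlinarith [hμpos s]
  · intro hlt
    have hpos : 0 < ∫ x in S..s, μ x * f (Z x) := by
      refine intervalIntegral.intervalIntegral_pos_of_pos_on
        hintcont.intervalIntegrable ?_ hlt
      intro x hx
      have hx' : x ∈ Set.uIcc S s := Set.Icc_subset_uIcc (Set.Ioo_subset_Icc_self hx)
      exact mul_pos (hμpos x) (hfpos _ (hZin x hx'))
    have : μ s * Z' s < 0 := by rw [hkey]; linarith
    nlinarith [hμpos s]
end
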